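/- arXiv:1510.06421 — 4 statements merged into one kernel-verified Lean document; each statement's English description precedes it below -/
import Mathlib

section
/- Let $n, p$ with $p \le n$ and let $x \in \mathbb{R}^n$. Then $x_1, \ldots, x_p \in \mathbb{Z}$ if and only if for every $a \in \mathbb{Z}^n$ with $a_{p+1} = \cdots = a_n = 0$ and every $b \in \mathbb{Z}$, the inequality $(a^T x - b)(a^T x - (b+1)) \ge 0$ holds. -/
lemma int_consec_prod_nonneg (k : ℤ) : ((k : ℝ)) * ((k : ℝ) - 1) ≥ 0 := by
  rcases le_or_gt k 0 with h | h
  · have h1 : (k : ℝ) ≤ 0 := by exact_mod_cast h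
    have h2 : (k : ℝ) - 1 ≤ 0 := by linarith
    nlinarith
  · have h1 : (1 : ℤ) ≤ k := h
    have h2 : (1 : ℝ) ≤ (k : ℝ) := by exact_mod_cast h1
    have := mul_nonneg (by linarith : (0:ℝ) ≤ (k:ℝ)) (by linarith : (0:ℝ) ≤ (k:ℝ) - 1)
    linarith

/-- The mixed-integer set `S = {x | x_1, …, x_p ∈ ℤ}` is exactly the set of
points satisfying all concave quadratic cuts `(aᵀx - b)(aᵀx - (b+1)) ≥ 0`
with `a ∈ ℤⁿ` supported on the first `p` coordinates and `b ∈ ℤ`. -/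
theorem mixed_integer_iff_all_cuts (n p : ℕ) (hp : p ≤ n) (x : Fin n → ℝ) :
    (∀ i : Fin n, (i : ℕ) < p → ∃ z : ℤ, x i = (z : ℝ)) ↔
    (∀ (a : Fin n → ℤ), (∀ i : Fin n, p ≤ (i : ℕ) → a i = 0) → ∀ b : ℤ,
      ((∑ i, (a i : ℝ) * x i) - (b : ℝ)) * ((∑ i, (a i : ℝ) * x i) - ((b : ℝ) + 1)) ≥ 0) := by
  constructor
  · intro hx a ha b
    -- choose integer values
    have hterm : ∀ i : Fin n, ∃ m : ℤ, (a i : ℝ) * x i = (m : ℝ) := by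
      intro i
      rcases lt_or_ge (i : ℕ) p with h | h
      · obtain ⟨z, hz⟩ := hx i h
        exact ⟨a i * z, by push_cast [hz]; ring⟩
      · exact ⟨0, by simp [ha i h]⟩
    choose m hm using hterm
    have hsum : (∑ i, (a i : ℝ) * x i) = ((∑ i, m i : ℤ) : ℝ) := by
      push_cast
      exact Finset.sum_congr rfl fun i _ => hm i
    rw [hsum]
    have := int_consec_prod_nonneg (∑ i, m i - b)
    push_cast at this ⊢
    nlinarith [this]
  · intro h i hip
    set a : Fin n → ℤ := fun j => if j = i then 1 else 0 with ha
    have hsupp : ∀ j : Fin n, p ≤ (j : ℕ) → a j = 0 := by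
      intro j hj
      have : j ≠ i := by
        intro hji; rw [hji] at hj; omega
      simp [ha, this]
    have hsum : (∑ j, (a j : ℝ) * x j) = x i := by
      rw [Finset.sum_eq_single i]
      · simp [ha]
      · intro j _ hj; simp [ha, hj]
      · simp
    have := h a hsupp ⌊x i⌋
    rw [hsum] at this
    have hfl : (⌊x i⌋ : ℝ) ≤ x i := Int.floor_le _
    have hfl2 : x i < (⌊x i⌋ : ℝ) + 1 := Int.lt_floor_add_one _
    refine ⟨⌊x i⌋, ?_⟩
    nlinarith [this, hfl, hfl2]
end

section
/- Let $X \in \mathbb{R}^{n \times n}$ be symmetric and $x \in \mathbb{R}^n$, and suppose $M = X - x x^T$ satisfies $a^T M a \ge \tfrac{1}{4} \|a\|_2^2$ for every $a \in \mathbb{R}^n$ (i.e., $M - \tfrac{1}{4} I$ is positive semidefinite). Then for every nonzero $a \in \mathbb{Z}^n$ and every $b \in \mathbb{R}$, $-\mathrm{Tr}(a a^T X) + (2b+1)\, a^T x - b(b+1) \le 0$. -/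
open Matrix

/-- If `M = X - xxᵀ` satisfies `aᵀMa ≥ ‖a‖²/4` for all real `a` (i.e.
`M - I/4 ⪰ 0`), then no lifted concave quadratic cut with nonzero integer `a`
is violated at `(X, x)`. -/
theorem no_cut_when_eigenvalues_large (n : ℕ) (X : Matrix (Fin n) (Fin n) ℝ)
    (hX : X.IsSymm) (x : Fin n → ℝ)
    (hM : ∀ a : Fin n → ℝ,
      a ⬝ᵥ (X - Matrix.vecMulVec x x).mulVec a ≥ (1 / 4) * ∑ i, (a i) ^ 2)
    (a : Fin n → ℤ) (ha : a ≠ 0) (b : ℝ) :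
    -((Matrix.vecMulVec (fun i => (a i : ℝ)) (fun i => (a i : ℝ)) * X).trace)
      + (2 * b + 1) * ((fun i => (a i : ℝ)) ⬝ᵥ x) - b * (b + 1) ≤ 0 := by
  set u : Fin n → ℝ := fun i => (a i : ℝ) with hu
  have key := hM u
  -- sum of squares of nonzero integer vector is at least 1
  obtain ⟨i0, hi0⟩ : ∃ i, a i ≠ 0 := by
    by_contra h
    push_neg at h
    exact ha (funext h)
  have hs : (1 : ℝ) ≤ ∑ i, (u i) ^ 2 := by
    have h1 : (1 : ℝ) ≤ (u i0) ^ 2 := by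
      have h2 : (1 : ℤ) ≤ (a i0) ^ 2 := by
        rcases lt_or_gt_of_ne hi0 with h | h <;> nlinarith
      have : ((1 : ℤ) : ℝ) ≤ (((a i0) ^ 2 : ℤ) : ℝ) := by exact_mod_cast h2
      push_cast at this
      simpa [hu] using this
    refine h1.trans ?_
    exact Finset.single_le_sum (fun i _ => sq_nonneg (u i)) (Finset.mem_univ i0)
  -- expand the quadratic form
  have hquad : u ⬝ᵥ (X - Matrix.vecMulVec x x).mulVec u
      = u ⬝ᵥ X.mulVec u - (u ⬝ᵥ x) * (u ⬝ᵥ x) := by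
    rw [Matrix.sub_mulVec, dotProduct_sub]
    congr 1
    simp only [Matrix.mulVec, dotProduct, Matrix.vecMulVec_apply, Finset.mul_sum]
    rw [Finset.sum_comm]
    refine Finset.sum_congr rfl fun i _ => ?_
    rw [Finset.sum_mul]
    refine Finset.sum_congr rfl fun j _ => ?_
    ring
  have htr : (Matrix.vecMulVec u u * X).trace = u ⬝ᵥ X.mulVec u := by
    simp only [Matrix.trace, Matrix.diag, Matrix.mul_apply, Matrix.vecMulVec_apply,
      Matrix.mulVec, dotProduct]
    rw [Finset.sum_comm]
    refine Finset.sum_congr rfl fun i _ => ?_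
    rw [Finset.mul_sum]
    refine Finset.sum_congr rfl fun j _ => ?_
    ring
  rw [hquad] at key
  have h14 : (1:ℝ)/4 * 1 ≤ (1/4) * ∑ i, (u i) ^ 2 := by linarith
  have hbound : u ⬝ᵥ X.mulVec u - (u ⬝ᵥ x) * (u ⬝ᵥ x) ≥ 1/4 := by linarith
  have : -((Matrix.vecMulVec u u * X).trace) + (2 * b + 1) * (u ⬝ᵥ x) - b * (b + 1) ≤ 0 := by
    rw [htr]
    nlinarith [sq_nonneg (u ⬝ᵥ x - b - 1/2)]
  simpa [hu] using this
end

section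
/- Let $p \ge 0$, $q, r \in \mathbb{R}$, and let $x, X \in \mathbb{R}$ satisfy $-X + (2b+1)\, x - b(b+1) \le 0$ for every $b \in \mathbb{Z}$. Then there exists $z \in \mathbb{Z}$ such that $p z^2 + q z + r \le p X + q x + r$. -/
/-- One-dimensional tightness: if `(X, x)` satisfies every lifted concave
quadratic cut `-X + (2b+1)x - b(b+1) ≤ 0` for `b ∈ ℤ`, then for any convex
quadratic `p t² + q t + r` (with `p ≥ 0`) some integer point has value at most
`p X + q x + r`. -/
theorem one_dim_relaxation_tight (p q r x X : ℝ) (hp : 0 ≤ p)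
    (hcuts : ∀ b : ℤ, -X + (2 * (b : ℝ) + 1) * x - (b : ℝ) * ((b : ℝ) + 1) ≤ 0) :
    ∃ z : ℤ, p * (z : ℝ) ^ 2 + q * (z : ℝ) + r ≤ p * X + q * x + r := by
  set b : ℤ := ⌊x⌋ with hb
  have hcut := hcuts b
  have h0 : (b : ℝ) ≤ x := Int.floor_le x
  have h1 : x ≤ (b : ℝ) + 1 := le_of_lt (Int.lt_floor_add_one x)
  by_cases hc : p * (b : ℝ) ^ 2 + q * (b : ℝ) ≤ p * ((b : ℝ) + 1) ^ 2 + q * ((b : ℝ) + 1)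
  · refine ⟨b, ?_⟩
    nlinarith [mul_nonneg hp (sub_nonneg.2 h0), mul_nonneg hp (sub_nonneg.2 h1),
      mul_nonneg (mul_nonneg hp (sub_nonneg.2 h0)) (sub_nonneg.2 h1)]
  · refine ⟨b + 1, ?_⟩
    push_cast
    push_neg at hc
    nlinarith [mul_nonneg hp (sub_nonneg.2 h0), mul_nonneg hp (sub_nonneg.2 h1),
      mul_nonneg (mul_nonneg hp (sub_nonneg.2 h0)) (sub_nonneg.2 h1)]
end

section
/- Let $\hat{X} = 0.6\, I \in \mathbb{R}^{2 \times 2}$ and $\hat{x} = 0 \in \mathbb{R}^2$. Then for every $a \in \mathbb{Z}^2$ and every $b \in \mathbb{Z}$, $-\mathrm{Tr}(a a^T \hat{X}) + (2b+1)\, a^T \hat{x} - b(b+1) = -0.6\, \|a\|_2^2 - b(b+1) \le 0$. -/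
open Matrix

lemma int_mul_succ_nonneg (b : ℤ) : (0:ℝ) ≤ (b:ℝ) * ((b:ℝ)+1) := by
  have h : (0:ℤ) ≤ b * (b+1) := by
    rcases le_or_gt 0 b with h | h
    · positivity
    · nlinarith
  exact_mod_cast h

/-- For `X̂ = 0.6 I` and `x̂ = 0` in dimension 2, every lifted concave quadratic
cut evaluates to `-0.6‖a‖² - b(b+1)`, which is nonpositive; hence no such cut
is violated at `(X̂, x̂)`. -/
theorem example_cuts_never_violated (a : Fin 2 → ℤ) (b : ℤ) :
    (-((Matrix.vecMulVec (fun i => (a i : ℝ)) (fun i => (a i : ℝ))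
          * ((0.6 : ℝ) • (1 : Matrix (Fin 2) (Fin 2) ℝ))).trace)
        + (2 * (b : ℝ) + 1) * ((fun i => (a i : ℝ)) ⬝ᵥ (0 : Fin 2 → ℝ))
        - (b : ℝ) * ((b : ℝ) + 1)
      = -0.6 * ((a 0 : ℝ) ^ 2 + (a 1 : ℝ) ^ 2) - (b : ℝ) * ((b : ℝ) + 1)) ∧
    -0.6 * ((a 0 : ℝ) ^ 2 + (a 1 : ℝ) ^ 2) - (b : ℝ) * ((b : ℝ) + 1) ≤ 0 := by
  constructor
  · simp [Matrix.trace, Matrix.vecMulVec, Matrix.mul_apply, Matrix.one_apply,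
      Fin.sum_univ_two, Matrix.diag]
    ring
  · have h1 : (0:ℝ) ≤ (a 0 : ℝ)^2 + (a 1 : ℝ)^2 := by positivity
    have h2 := int_mul_succ_nonneg b
    nlinarith
end
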